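/- For any α ∈ (0,1), γ(α,2) = max{(1−α)^2, 1 − α^{1/2}}, where γ(α,n) is the supremum over all finite alphabets Ω and all A ⊆ Ω^n with μ(A) ≥ α of μ(U(A)). -/

import Mathlib

/-- Uniform measure (density) of a set of words of length `n` over alphabet `Ω`. -/
noncomputable def meas {Ω : Type*} [Fintype Ω] {n : ℕ} (S : Set (Fin n → Ω)) : ℝ :=
  (Nat.card S : ℝ) / (Fintype.card Ω : ℝ) ^ n

/-- `covers A j` is the set `s^j(A) × Ω^j ⊆ Ω^n`. -/
def covers {Ω : Type*} {n : ℕ} (A : Set (Fin n → Ω)) (j : ℕ) : Set (Fin n → Ω) :=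
  {w | ∃ a ∈ A, ∀ i : Fin n, ∀ h : (i : ℕ) + j < n, w i = a ⟨(i : ℕ) + j, h⟩}

/-- `Uset A = Ω^n \ ⋃_{j=0}^{n-1} s^j(A) × Ω^j`. -/
def Uset {Ω : Type*} {n : ℕ} (A : Set (Fin n → Ω)) : Set (Fin n → Ω) :=
  {u | ∀ j < n, u ∉ covers A j}

/-- `gammaFun α n` is the supremum, over all finite nonempty alphabets `Ω` and all
`A ⊆ Ω^n` with `μ(A) ≥ α`, of `μ(U(A))`. -/
noncomputable def gammaFun (α : ℝ) (n : ℕ) : ℝ :=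
  sSup {x : ℝ | ∃ (Ω : Type) (inst : Fintype Ω) (_ : Nonempty Ω) (A : Set (Fin n → Ω)),
    α ≤ @meas Ω inst n A ∧ x = @meas Ω inst n (Uset A)}

/-! For `n = 2` a word `w` is uncovered iff `w ∉ A` and its first letter lies outside the set `B`
of last letters of words of `A`, so `U(A) = (A ∪ B × Ω)ᶜ`. Since `A ⊆ Ω × B` and
`A ∩ (B × Ω) ⊆ B × B`, with `x = μ(B)` we get `μ(A) ≤ x`, `μ(U(A)) ≤ 1 - x` and
`μ(U(A)) ≤ 1 - x - μ(A) + x²`; optimising over `x ≥ α` gives the upper bound. It is approached by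
`A = B × B` with `μ(B) ↓ √α` and by `A = Ω × B` with `μ(B) ↓ α`. -/

open Set

def gammaSet (α : ℝ) (n : ℕ) : Set ℝ :=
  {x : ℝ | ∃ (Ω : Type) (inst : Fintype Ω) (_ : Nonempty Ω) (A : Set (Fin n → Ω)),
    α ≤ @meas Ω inst n A ∧ x = @meas Ω inst n (Uset A)}

theorem gammaFun_eq_sSup_gammaSet (α : ℝ) (n : ℕ) : gammaFun α n = sSup (gammaSet α n) := rfl

section Measure

variable {Ω : Type*} [Fintype Ω]

noncomputable def density (B : Set Ω) : ℝ :=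
  B.ncard / Fintype.card Ω

theorem density_compl [Nonempty Ω] (B : Set Ω) : density Bᶜ = 1 - density B := by
  have hcard : (Fintype.card Ω : ℝ) ≠ 0 := by positivity
  have h := Set.ncard_add_ncard_compl B
  rw [Nat.card_eq_fintype_card] at h
  rw [density, density, eq_sub_iff_add_eq, ← add_div, div_eq_one_iff_eq hcard]
  exact_mod_cast (add_comm _ _).trans h

theorem density_univ [Nonempty Ω] : density (univ : Set Ω) = 1 := by
  rw [← compl_empty, density_compl]
  simp [density]

variable {n : ℕ}

theorem meas_eq_ncard (S : Set (Fin n → Ω)) :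
    meas S = S.ncard / (Fintype.card Ω : ℝ) ^ n := by
  rw [meas, Nat.card_coe_set_eq]

theorem meas_mono {S T : Set (Fin n → Ω)} (h : S ⊆ T) : meas S ≤ meas T := by
  simp only [meas_eq_ncard]
  gcongr
  exact T.toFinite

theorem meas_union_add_meas_inter (S T : Set (Fin n → Ω)) :
    meas (S ∪ T) + meas (S ∩ T) = meas S + meas T := by
  simp only [meas_eq_ncard, ← add_div]
  exact_mod_cast congrArg (fun k : ℕ => (k : ℝ) / (Fintype.card Ω : ℝ) ^ n)
    (Set.ncard_union_add_ncard_inter S T)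

theorem meas_compl [Nonempty Ω] (S : Set (Fin n → Ω)) : meas Sᶜ = 1 - meas S := by
  have hcard : (Fintype.card Ω : ℝ) ^ n ≠ 0 := by positivity
  have h := Set.ncard_add_ncard_compl S
  rw [Nat.card_eq_fintype_card, Fintype.card_fun, Fintype.card_fin] at h
  rw [meas_eq_ncard, meas_eq_ncard, eq_sub_iff_add_eq, ← add_div, div_eq_one_iff_eq hcard]
  exact_mod_cast (add_comm _ _).trans h

theorem meas_setOf_mem_and_mem (P Q : Set Ω) :
    meas {w : Fin 2 → Ω | w 0 ∈ P ∧ w 1 ∈ Q} = density P * density Q := by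
  have hpre : {w : Fin 2 → Ω | w 0 ∈ P ∧ w 1 ∈ Q} = piFinTwoEquiv (fun _ => Ω) ⁻¹' P ×ˢ Q := rfl
  rw [meas_eq_ncard, hpre, Set.ncard_preimage_of_injective_subset_range (Equiv.injective _)
    (fun x _ => (piFinTwoEquiv _).surjective x), Set.ncard_prod, density, density]
  push_cast
  ring

end Measure

section TwoLetterWords

variable {Ω : Type*}

theorem covers_zero {n : ℕ} (A : Set (Fin n → Ω)) : covers A 0 = A := by
  ext w
  refine ⟨fun ⟨a, ha, hwa⟩ => ?_, fun hw => ⟨w, hw, fun i _ => rfl⟩⟩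
  rwa [show w = a from funext fun i => hwa i i.2]

theorem covers_one_two (A : Set (Fin 2 → Ω)) :
    covers A 1 = {w | w 0 ∈ (fun a => a 1) '' A} := by
  ext w
  constructor
  · rintro ⟨a, ha, hwa⟩
    exact ⟨a, ha, (hwa 0 one_lt_two).symm⟩
  · rintro ⟨a, ha, haw⟩
    refine ⟨a, ha, fun i hi => ?_⟩
    obtain rfl : i = 0 := Fin.ext (by omega)
    exact haw.symm

theorem Uset_two (A : Set (Fin 2 → Ω)) :
    Uset A = (A ∪ {w | w 0 ∈ (fun a => a 1) '' A})ᶜ := by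
  ext w
  simp only [Uset, mem_ofPred_eq, mem_compl_iff, mem_union, not_or, Nat.lt_succ_iff,
    Nat.le_one_iff_eq_zero_or_eq_one, forall_eq_or_imp, forall_eq, covers_zero, covers_one_two]

theorem Uset_square (B : Set Ω) :
    Uset {w : Fin 2 → Ω | w 0 ∈ B ∧ w 1 ∈ B} = {w | w 0 ∈ Bᶜ ∧ w 1 ∈ univ} := by
  ext w
  simp only [Uset_two, mem_compl_iff, mem_union, mem_ofPred_eq, mem_image, mem_univ, and_true]
  constructor
  · exact fun h hw0 => h (Or.inr ⟨fun _ => w 0, ⟨hw0, hw0⟩, rfl⟩)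
  · rintro hw0 (⟨h0, -⟩ | ⟨a, ⟨-, ha⟩, haw⟩)
    exacts [hw0 h0, hw0 (haw ▸ ha)]

theorem Uset_strip (B : Set Ω) :
    Uset {w : Fin 2 → Ω | w 0 ∈ univ ∧ w 1 ∈ B} = {w | w 0 ∈ Bᶜ ∧ w 1 ∈ Bᶜ} := by
  ext w
  simp only [Uset_two, mem_compl_iff, mem_union, mem_ofPred_eq, mem_image, mem_univ, true_and]
  constructor
  · exact fun h => ⟨fun hw0 => h (Or.inr ⟨fun _ => w 0, hw0, rfl⟩), fun hw1 => h (Or.inl hw1)⟩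
  · rintro ⟨hw0, hw1⟩ (h1 | ⟨a, ha, haw⟩)
    exacts [hw1 h1, hw0 (haw ▸ ha)]

variable [Fintype Ω] [Nonempty Ω]

theorem exists_bounds_meas_Uset_two (A : Set (Fin 2 → Ω)) : ∃ x, meas A ≤ x ∧
    meas (Uset A) ≤ 1 - x ∧ meas (Uset A) + meas A ≤ 1 - x + x ^ 2 := by
  set B := (fun a => a 1) '' A
  set C := {w : Fin 2 → Ω | w 0 ∈ B}
  have hC : meas C = density B := by
    have : C = {w | w 0 ∈ B ∧ w 1 ∈ univ} := by ext; simp [C]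
    rw [this, meas_setOf_mem_and_mem, density_univ, mul_one]
  have hA : A ⊆ {w | w 0 ∈ univ ∧ w 1 ∈ B} := fun w hw => ⟨trivial, w, hw, rfl⟩
  have hAC : A ∩ C ⊆ {w | w 0 ∈ B ∧ w 1 ∈ B} := fun w hw => ⟨hw.2, w, hw.1, rfl⟩
  have hU : meas (Uset A) = 1 - meas (A ∪ C) := by rw [Uset_two, meas_compl]
  refine ⟨density B, ?_, ?_, ?_⟩
  · have hmono := meas_mono hA
    rwa [meas_setOf_mem_and_mem, density_univ, one_mul] at hmono
  · linarith [meas_mono (subset_union_right : C ⊆ A ∪ C)]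
  · have hinter := meas_mono hAC
    rw [meas_setOf_mem_and_mem] at hinter
    linarith [meas_union_add_meas_inter A C]

end TwoLetterWords

theorem le_max_sq_one_sub_sqrt {α x u : ℝ} (hα : 0 ≤ α) (hαx : α ≤ x) (hu : u ≤ 1 - x)
    (hu' : u ≤ 1 - x - α + x ^ 2) : u ≤ max ((1 - α) ^ 2) (1 - √α) := by
  -- `1 - x - α + x ^ 2` is convex in `x`: on `[α, √α]` it stays below its endpoint values.
  have hsq : √α ^ 2 = α := Real.sq_sqrt hα
  rcases le_or_gt √α x with hx | hx
  · exact le_max_of_le_right (by linarith)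
  rcases le_or_gt (x + α) 1 with hxα | hxα
  · exact le_max_of_le_left (by nlinarith [mul_nonneg (sub_nonneg.2 hαx) (sub_nonneg.2 hxα)])
  · have hα1 : α ≤ √α := by nlinarith [Real.sqrt_nonneg α]
    have hxs : 0 ≤ x + √α - 1 := by linarith
    exact le_max_of_le_right (by nlinarith [mul_nonneg (sub_nonneg.2 hx.le) hxs])

theorem le_max_of_mem_gammaSet_two {α x : ℝ} (hα : 0 ≤ α) (hx : x ∈ gammaSet α 2) :
    x ≤ max ((1 - α) ^ 2) (1 - √α) := by
  obtain ⟨Ω, _, _, A, hA, rfl⟩ := hx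
  obtain ⟨y, hAy, hU, hU'⟩ := exists_bounds_meas_Uset_two A
  exact le_max_sq_one_sub_sqrt hα (hA.trans hAy) hU (by linarith)

theorem one_sub_density_mem_gammaSet {α : ℝ} {Ω : Type} [Fintype Ω] [Nonempty Ω] (B : Set Ω)
    (h : α ≤ density B ^ 2) : 1 - density B ∈ gammaSet α 2 :=
  ⟨Ω, inferInstance, inferInstance, {w | w 0 ∈ B ∧ w 1 ∈ B},
    by rwa [meas_setOf_mem_and_mem, ← sq],
    by rw [Uset_square, meas_setOf_mem_and_mem, density_compl, density_univ, mul_one]⟩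

theorem one_sub_density_sq_mem_gammaSet {α : ℝ} {Ω : Type} [Fintype Ω] [Nonempty Ω] (B : Set Ω)
    (h : α ≤ density B) : (1 - density B) ^ 2 ∈ gammaSet α 2 :=
  ⟨Ω, inferInstance, inferInstance, {w | w 0 ∈ univ ∧ w 1 ∈ B},
    by rwa [meas_setOf_mem_and_mem, density_univ, one_mul],
    by rw [Uset_strip, meas_setOf_mem_and_mem, density_compl, sq]⟩

theorem exists_density_mem_Ico {t ε : ℝ} (ht0 : 0 ≤ t) (ht1 : t ≤ 1) (hε : 0 < ε) :
    ∃ (m : ℕ) (B : Set (Fin (m + 1))), t ≤ density B ∧ density B < t + ε := by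
  obtain ⟨m, hm⟩ := exists_nat_gt (1 / ε)
  have hM : (0 : ℝ) < m + 1 := by positivity
  have hεM : 1 < ε * (m + 1) := by rw [div_lt_iff₀ hε] at hm; linarith
  set b := ⌈t * (m + 1)⌉₊
  have hb : b ≤ (Finset.univ : Finset (Fin (m + 1))).card := by
    rw [Finset.card_univ, Fintype.card_fin]
    exact Nat.ceil_le.2 (by push_cast; nlinarith)
  obtain ⟨s, -, hs⟩ := Finset.exists_subset_card_eq hb
  have hdens : density (s : Set (Fin (m + 1))) = b / (m + 1) := by
    rw [density, ncard_coe_finset, hs, Fintype.card_fin]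
    push_cast
    rfl
  refine ⟨m, s, ?_, ?_⟩
  · rw [hdens, le_div_iff₀ hM]
    exact Nat.le_ceil _
  · rw [hdens, div_lt_iff₀ hM]
    nlinarith [Nat.ceil_lt_add_one (mul_nonneg ht0 hM.le)]

theorem exists_gt_of_lt_one_sub_sqrt {α w : ℝ} (hα0 : 0 ≤ α) (hα1 : α ≤ 1) (hw : w < 1 - √α) :
    ∃ x ∈ gammaSet α 2, w < x := by
  obtain ⟨m, B, hB, hB'⟩ :=
    exists_density_mem_Ico (Real.sqrt_nonneg α) (Real.sqrt_le_one.2 hα1) (sub_pos.2 hw)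
  refine ⟨_, one_sub_density_mem_gammaSet B ?_, by linarith⟩
  calc α = √α ^ 2 := (Real.sq_sqrt hα0).symm
    _ ≤ density B ^ 2 := by gcongr

theorem exists_gt_of_lt_one_sub_sq {α w : ℝ} (hα0 : 0 ≤ α) (hα1 : α ≤ 1) (hw : w < (1 - α) ^ 2) :
    ∃ x ∈ gammaSet α 2, w < x := by
  obtain ⟨m, B, hB, hB'⟩ := exists_density_mem_Ico hα0 hα1 (half_pos (sub_pos.2 hw))
  refine ⟨_, one_sub_density_sq_mem_gammaSet B hB, ?_⟩
  -- `(1 - d) ^ 2 = (1 - α) ^ 2 - 2 * (d - α) + (d - α) * (d + α)`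
  nlinarith [mul_nonneg (sub_nonneg.2 hB) (add_nonneg (hα0.trans hB) hα0)]

theorem stmt9 (α : ℝ) (h0 : 0 < α) (h1 : α < 1) :
    gammaFun α 2 = max ((1 - α) ^ 2) (1 - Real.sqrt α) := by
  rw [gammaFun_eq_sSup_gammaSet]
  have hlt : ∀ w < max ((1 - α) ^ 2) (1 - √α), ∃ x ∈ gammaSet α 2, w < x := fun w hw =>
    (lt_max_iff.1 hw).elim (exists_gt_of_lt_one_sub_sq h0.le h1.le)
      (exists_gt_of_lt_one_sub_sqrt h0.le h1.le)
  obtain ⟨x, hx, -⟩ := hlt _ (sub_one_lt _)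
  exact csSup_eq_of_forall_le_of_forall_lt_exists_gt ⟨x, hx⟩
    (fun _ => le_max_of_mem_gammaSet_two h0.le) hlt
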